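/- Every extreme point X of the spectrahedron {X ∈ S^n : Tr(A_iX) = b_i for i = 1,…,m, X positive semidefinite} has rank r satisfying r(r+1)/2 ≤ m. -/

import Mathlib

/-!
Write the extreme point as `X = P D Pᵀ`, where `P` has `r = rank X` orthonormal columns and `D` is
a positive diagonal matrix. For a symmetric `r × r` matrix `B` the matrices `X ± ε P B Pᵀ` stay
positive semidefinite for small `ε > 0`, so if `P B Pᵀ` satisfies the homogeneous constraints
`Tr (Aᵢ P B Pᵀ) = 0`, extremality of `X` forces `P B Pᵀ = 0`, i.e. `B = 0`. Hence
`B ↦ (Tr (Aᵢ P B Pᵀ))ᵢ` is injective on the `r (r + 1) / 2`-dimensional space of symmetric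
`r × r` matrices, and `r (r + 1) / 2 ≤ m`.
-/

open Matrix

theorem eq_zero_of_add_mem_of_sub_mem_extremePoints {𝕜 E : Type*} [Field 𝕜] [LinearOrder 𝕜]
    [IsStrictOrderedRing 𝕜] [AddCommGroup E] [Module 𝕜 E] {s : Set E} {x v : E}
    (hx : x ∈ s.extremePoints 𝕜) (hadd : x + v ∈ s) (hsub : x - v ∈ s) : v = 0 := by
  have hmid : x ∈ openSegment 𝕜 (x + v) (x - v) :=
    ⟨1 / 2, 1 / 2, by norm_num, by norm_num, by norm_num, by module⟩
  simpa using hx.2 hadd hsub hmid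

theorem Sym2.two_mul_card {α : Type*} [Fintype α] :
    2 * Fintype.card (Sym2 α) = Fintype.card α * (Fintype.card α + 1) := by
  rw [Sym2.card, Nat.choose_two_right, Nat.two_mul_div_two_of_even (Nat.even_mul_pred_self _),
    Nat.add_sub_cancel, mul_comm]

namespace Matrix

variable {ι : Type*}

/-- Functions on unordered pairs parametrize the symmetric matrices. -/
def ofSym2 {R : Type*} [Semiring R] : (Sym2 ι → R) →ₗ[R] Matrix ι ι R where
  toFun f := of fun i j => f s(i, j)
  map_add' _ _ := rfl
  map_smul' _ _ := rfl

theorem isSymm_ofSym2 {R : Type*} [Semiring R] (f : Sym2 ι → R) : (ofSym2 f).IsSymm := by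
  ext i j
  exact congrArg f Sym2.eq_swap

theorem ofSym2_injective {R : Type*} [Semiring R] :
    Function.Injective (ofSym2 : (Sym2 ι → R) → Matrix ι ι R) := by
  intro f g hfg
  funext z
  induction z using Sym2.ind with
  | h i j => exact congrFun (congrFun hfg i) j

theorem mul_diagonal_mul_transpose_apply {n k R : Type*} [Fintype k] [DecidableEq k]
    [Semiring R] (M N : Matrix n k R) (d : k → R) (a c : n) :
    (M * diagonal d * Nᵀ) a c = ∑ i, M a i * d i * N c i := by
  rw [mul_apply]
  simp only [mul_diagonal, transpose_apply]

theorem PosSemidef.exists_eq_mul_diagonal_mul_transpose [Fintype ι] [DecidableEq ι]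
    {X : Matrix ι ι ℝ} (hX : X.PosSemidef) :
    ∃ (P : Matrix ι (Fin X.rank) ℝ) (D : Fin X.rank → ℝ),
      (∀ j, 0 < D j) ∧ Pᵀ * P = 1 ∧ X = P * diagonal D * Pᵀ := by
  set U : Matrix ι ι ℝ := (hX.1.eigenvectorUnitary : Matrix ι ι ℝ)
  set lam := hX.1.eigenvalues
  let e : Fin X.rank ≃ {i // lam i ≠ 0} :=
    (Fintype.equivFinOfCardEq hX.1.rank_eq_card_non_zero_eigs.symm).symm
  set f : Fin X.rank → ι := Subtype.val ∘ e
  have hf : Function.Injective f := Subtype.val_injective.comp e.injective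
  have hUU : Uᵀ * U = 1 := by
    simpa [star_eq_conjTranspose] using mem_unitaryGroup_iff'.mp hX.1.eigenvectorUnitary.2
  have hspec : X = U * diagonal lam * Uᵀ := by
    simpa [star_eq_conjTranspose] using hX.1.spectral_theorem
  refine ⟨U.submatrix id f, lam ∘ f, fun j => ?_, ?_, ?_⟩
  · exact (hX.eigenvalues_nonneg _).lt_of_ne' (e j).2
  · rw [transpose_submatrix, ← submatrix_mul _ _ _ _ _ Function.bijective_id, hUU,
      submatrix_one f hf]
  · ext a c
    refine (congr_fun₂ hspec a c).trans ?_
    simp only [mul_diagonal_mul_transpose_apply]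
    refine (Fintype.sum_of_injective f hf _ _ (fun i hi => ?_) fun j => rfl).symm
    have hlam : lam i = 0 := by_contra fun h => hi ⟨e.symm ⟨i, h⟩, by simp [f]⟩
    simp [hlam]

theorem abs_dotProduct_mulVec_le [Fintype ι] (B : Matrix ι ι ℝ) (x : ι → ℝ) :
    |x ⬝ᵥ B *ᵥ x| ≤ (∑ i, ∑ j, |B i j|) * (x ⬝ᵥ x) := by
  have hsq : ∀ i, x i ^ 2 ≤ x ⬝ᵥ x := fun i => by
    simpa [dotProduct, sq] using
      Finset.single_le_sum (fun k _ => mul_self_nonneg (x k)) (Finset.mem_univ i)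
  have hpair : ∀ i j, |x i * x j| ≤ x ⬝ᵥ x := fun i j => by
    rw [abs_mul]
    nlinarith [hsq i, hsq j, sq_abs (x i), sq_abs (x j), sq_nonneg (|x i| - |x j|)]
  calc |x ⬝ᵥ B *ᵥ x| = |∑ i, ∑ j, B i j * (x i * x j)| := by
        simp only [dotProduct, mulVec, Finset.mul_sum]
        congr 1
        exact Finset.sum_congr rfl fun i _ => Finset.sum_congr rfl fun j _ => by ring
    _ ≤ ∑ i, ∑ j, |B i j| * (x ⬝ᵥ x) := by
        refine (Finset.abs_sum_le_sum_abs _ _).trans (Finset.sum_le_sum fun i _ => ?_)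
        refine (Finset.abs_sum_le_sum_abs _ _).trans (Finset.sum_le_sum fun j _ => ?_)
        rw [abs_mul]
        exact mul_le_mul_of_nonneg_left (hpair i j) (abs_nonneg _)
    _ = (∑ i, ∑ j, |B i j|) * (x ⬝ᵥ x) := by simp only [Finset.sum_mul]

theorem exists_posSemidef_diagonal_add_smul [Fintype ι] [DecidableEq ι] {D : ι → ℝ}
    (hD : ∀ i, 0 < D i) {B : Matrix ι ι ℝ} (hB : B.IsSymm) :
    ∃ ε > 0, ∀ t : ℝ, |t| ≤ ε → (diagonal D + t • B).PosSemidef := by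
  obtain ⟨c, hc, hcD⟩ : ∃ c > 0, ∀ i, c ≤ D i := by
    cases isEmpty_or_nonempty ι
    · exact ⟨1, one_pos, isEmptyElim⟩
    · obtain ⟨i₀, hi₀⟩ := Finite.exists_min D
      exact ⟨D i₀, hD i₀, hi₀⟩
  set T := ∑ i, ∑ j, |B i j|
  have hT : 0 ≤ T := by positivity
  refine ⟨c / (T + 1), by positivity, fun t ht => ?_⟩
  have htT : |t| * T ≤ c :=
    calc |t| * T ≤ c / (T + 1) * (T + 1) := by gcongr; linarith
      _ = c := div_mul_cancel₀ c (by positivity)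
  refine .of_dotProduct_mulVec_nonneg ?_ fun x => ?_
  · simp only [IsHermitian, conjTranspose_eq_transpose_of_trivial, transpose_add,
      diagonal_transpose, transpose_smul, hB.eq]
  have hdiag : c * (x ⬝ᵥ x) ≤ x ⬝ᵥ diagonal D *ᵥ x := by
    simp only [dotProduct, mulVec_diagonal, Finset.mul_sum]
    exact Finset.sum_le_sum fun i _ => by nlinarith [hcD i, mul_self_nonneg (x i)]
  have hpert : |t * (x ⬝ᵥ B *ᵥ x)| ≤ c * (x ⬝ᵥ x) := by
    rw [abs_mul]
    calc |t| * |x ⬝ᵥ B *ᵥ x| ≤ |t| * (T * (x ⬝ᵥ x)) := by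
          gcongr; exact abs_dotProduct_mulVec_le B x
      _ ≤ c * (x ⬝ᵥ x) := by
          rw [← mul_assoc]; gcongr; exact dotProduct_self_star_nonneg x
  rw [star_trivial, add_mulVec, dotProduct_add, smul_mulVec, dotProduct_smul, smul_eq_mul]
  linarith [(abs_le.mp hpert).1]

end Matrix

section Spectrahedron

variable {n k ι : Type*} [Fintype n] [Fintype k] [DecidableEq k]

def spectrahedron (A : ι → Matrix n n ℝ) (b : ι → ℝ) : Set (Matrix n n ℝ) :=
  {Y | Y.PosSemidef ∧ ∀ i, (A i * Y).trace = b i}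

theorem mul_mul_transpose_eq_zero_of_mem_extremePoints {A : ι → Matrix n n ℝ} {b : ι → ℝ}
    {P : Matrix n k ℝ} {D : k → ℝ} (hD : ∀ j, 0 < D j)
    (hX : P * diagonal D * Pᵀ ∈ (spectrahedron A b).extremePoints ℝ)
    {B : Matrix k k ℝ} (hB : B.IsSymm) (hAB : ∀ i, (A i * (P * B * Pᵀ)).trace = 0) :
    P * B * Pᵀ = 0 := by
  obtain ⟨ε, hε, hpsd⟩ := exists_posSemidef_diagonal_add_smul hD hB
  have hmem : ∀ t, |t| ≤ ε → P * diagonal D * Pᵀ + t • (P * B * Pᵀ) ∈ spectrahedron A b := by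
    intro t ht
    refine ⟨?_, fun i => ?_⟩
    · simpa only [conjTranspose_eq_transpose_of_trivial, Matrix.mul_add, Matrix.add_mul,
        Matrix.mul_smul, Matrix.smul_mul]
        using (hpsd t ht).mul_mul_conjTranspose_same P
    · rw [Matrix.mul_add, trace_add, hX.1.2 i, Matrix.mul_smul, trace_smul, hAB i, smul_zero, add_zero]
  have hεB : ε • (P * B * Pᵀ) = 0 :=
    eq_zero_of_add_mem_of_sub_mem_extremePoints hX (hmem ε (abs_of_pos hε).le)
      (by simpa [sub_eq_add_neg] using hmem (-ε) (by rw [abs_neg, abs_of_pos hε]))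
  exact (smul_eq_zero.mp hεB).resolve_left hε.ne'

theorem card_sym2_le_card_of_mem_extremePoints [Fintype ι] {A : ι → Matrix n n ℝ}
    {b : ι → ℝ} {P : Matrix n k ℝ} {D : k → ℝ} (hD : ∀ j, 0 < D j) (hPP : Pᵀ * P = 1)
    (hX : P * diagonal D * Pᵀ ∈ (spectrahedron A b).extremePoints ℝ) :
    Fintype.card (Sym2 k) ≤ Fintype.card ι := by
  let L : (Sym2 k → ℝ) →ₗ[ℝ] ι → ℝ :=
    { toFun f i := (A i * (P * ofSym2 f * Pᵀ)).trace
      map_add' f g := by ext i; simp [Matrix.mul_add, Matrix.add_mul]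
      map_smul' c f := by ext i; simp }
  have hL : Function.Injective L := by
    refine (injective_iff_map_eq_zero L).mpr fun f hf => ofSym2_injective ?_
    have hzero := mul_mul_transpose_eq_zero_of_mem_extremePoints hD hX (isSymm_ofSym2 f)
      (congrFun hf)
    calc ofSym2 f = Pᵀ * P * ofSym2 f * (Pᵀ * P) := by rw [hPP, Matrix.one_mul, Matrix.mul_one]
      _ = Pᵀ * (P * ofSym2 f * Pᵀ) * P := by simp only [Matrix.mul_assoc]
      _ = ofSym2 0 := by rw [hzero, Matrix.mul_zero, Matrix.zero_mul, map_zero]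
  simpa using LinearMap.finrank_le_finrank_of_injective hL

end Spectrahedron

theorem spectrahedron_extreme_point_rank_bound_general
    (n m : ℕ) (A : Fin m → Matrix (Fin n) (Fin n) ℝ)
    (b : Fin m → ℝ) (X : Matrix (Fin n) (Fin n) ℝ)
    (hX : X ∈ Set.extremePoints ℝ
      {Y : Matrix (Fin n) (Fin n) ℝ | Y.PosSemidef ∧ ∀ i, (A i * Y).trace = b i}) :
    X.rank * (X.rank + 1) ≤ 2 * m := by
  obtain ⟨P, D, hD, hPP, hXPD⟩ := hX.1.1.exists_eq_mul_diagonal_mul_transpose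
  rw [hXPD] at hX
  have hcard := card_sym2_le_card_of_mem_extremePoints hD hPP hX
  rw [Fintype.card_fin] at hcard
  simpa [Sym2.two_mul_card] using Nat.mul_le_mul_left 2 hcard

/-- Every extreme point `X` of the spectrahedron
`{X ∈ Sⁿ : Tr(Aᵢ X) = bᵢ for i = 1,…,m, X ⪰ 0}` has rank `r` satisfying `r(r+1)/2 ≤ m`. -/
theorem spectrahedron_extreme_point_rank_bound
    (n m : ℕ) (A : Fin m → Matrix (Fin n) (Fin n) ℝ) (hA : ∀ i, (A i).IsSymm)
    (b : Fin m → ℝ) (X : Matrix (Fin n) (Fin n) ℝ)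
    (hX : X ∈ Set.extremePoints ℝ
      {Y : Matrix (Fin n) (Fin n) ℝ | Y.PosSemidef ∧ ∀ i, (A i * Y).trace = b i}) :
    X.rank * (X.rank + 1) ≤ 2 * m :=
  spectrahedron_extreme_point_rank_bound_general n m A b X hX
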